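/- arXiv:math/0409139 — 3 statements merged into one kernel-verified Lean document; each statement's English description precedes it below -/
import Mathlib

section
/- Let f = (f_n) be a martingale on a probability space bounded in L¹, and let S(f) = (Σ_{n≥1} |f_n - f_{n-1}|²)^{1/2} be its square function (with f_0 = 0). Then there exists an absolute constant M > 0 such that for every λ > 0, λ · P(S(f) > λ) ≤ M · sup_n E|f_n|. -/
open MeasureTheory Finset Function

/-!
The Bellman function `Ψ(x, t) = |x|` for `t ≤ x²`, `Ψ(x, t) = (x² + t) / (2√t)` otherwise, satisfies
`Ψ(x, t) + s(x, t) d ≤ Ψ(x + d, t - d²)` for a slope `|s| ≤ 1`. Along a martingale `f` the slope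
term has mean zero, so `E Ψ(f_n, 1 - S_n²)`, with `S_n²` the sum of the first `n` squared
increments, is nondecreasing. As `Ψ(0, 1) = 1/2`, `Ψ(x, t) = |x|` for `t ≤ 0` and `Ψ(x, t) ≤ |x| + 1/2`
for `t ≤ 1`, this gives `P(S_N ≥ 1) ≤ 2 E|f_N|`. Scaling `f` by `λ⁻¹` and letting `N → ∞` proves the
theorem with `M = 2`.
-/

noncomputable def squareBellman (x t : ℝ) : ℝ :=
  if t ≤ x ^ 2 then |x| else (x ^ 2 + t) / (2 * √t)

noncomputable def squareBellmanSlope (x t : ℝ) : ℝ :=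
  if t ≤ x ^ 2 then (if 0 ≤ x then 1 else -1) else x / √t

lemma squareBellman_of_le_sq {x t : ℝ} (h : t ≤ x ^ 2) : squareBellman x t = |x| :=
  if_pos h

lemma squareBellman_of_sq_lt {x t : ℝ} (h : x ^ 2 < t) :
    squareBellman x t = (x ^ 2 + t) / (2 * √t) :=
  if_neg h.not_ge

lemma squareBellmanSlope_of_sq_lt {x t : ℝ} (h : x ^ 2 < t) :
    squareBellmanSlope x t = x / √t :=
  if_neg h.not_ge

lemma squareBellman_zero_one : squareBellman 0 1 = 1 / 2 := by
  norm_num [squareBellman]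

lemma div_le_squareBellman {y u r : ℝ} (hr : 0 < r) (hy : |y| ≤ r) (hu : u ≤ r ^ 2) :
    (y ^ 2 + u) / (2 * r) ≤ squareBellman y u := by
  rcases le_or_gt u (y ^ 2) with h | h
  · rw [squareBellman_of_le_sq h, div_le_iff₀ (by positivity)]
    nlinarith [sq_abs y, mul_le_mul_of_nonneg_left hy (abs_nonneg y)]
  · have hu0 : 0 < u := (sq_nonneg y).trans_lt h
    rw [squareBellman_of_sq_lt h]
    gcongr
    exact Real.sqrt_le_iff.mpr ⟨hr.le, hu⟩

lemma abs_le_squareBellman (x t : ℝ) : |x| ≤ squareBellman x t := by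
  rcases le_or_gt t (x ^ 2) with h | h
  · exact (squareBellman_of_le_sq h).ge
  · have hx : |x| < √t := Real.lt_sqrt_of_sq_lt ((sq_abs x).trans_lt h)
    have hs : √t ^ 2 = t := Real.sq_sqrt ((sq_nonneg x).trans h.le)
    rw [squareBellman_of_sq_lt h, le_div_iff₀ (by linarith [abs_nonneg x]), ← sq_abs]
    nlinarith [sq_nonneg (|x| - √t)]

lemma squareBellman_le_abs_add_half {x t : ℝ} (ht : t ≤ 1) : squareBellman x t ≤ |x| + 1 / 2 := by
  rcases le_or_gt t (x ^ 2) with h | h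
  · rw [squareBellman_of_le_sq h]; linarith
  · have hx : |x| < √t := Real.lt_sqrt_of_sq_lt ((sq_abs x).trans_lt h)
    have hs1 : √t ≤ 1 := Real.sqrt_le_one.mpr ht
    have hs : √t ^ 2 = t := Real.sq_sqrt ((sq_nonneg x).trans h.le)
    rw [squareBellman_of_sq_lt h, div_le_iff₀ (by linarith [abs_nonneg x]), ← sq_abs]
    nlinarith [abs_nonneg x]

lemma squareBellman_one_sub_of_one_le (x : ℝ) {y : ℝ} (hy : 1 ≤ y) :
    squareBellman x (1 - y) = |x| :=
  squareBellman_of_le_sq (by linarith [sq_nonneg x])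

lemma abs_squareBellmanSlope_le (x t : ℝ) : |squareBellmanSlope x t| ≤ 1 := by
  rcases le_or_gt t (x ^ 2) with h | h
  · simp only [squareBellmanSlope, if_pos h]
    split_ifs <;> simp
  · have hx : |x| < √t := Real.lt_sqrt_of_sq_lt ((sq_abs x).trans_lt h)
    rw [squareBellmanSlope_of_sq_lt h, abs_div, abs_of_pos ((abs_nonneg x).trans_lt hx)]
    exact div_le_one_of_le₀ hx.le (Real.sqrt_nonneg t)

lemma squareBellman_add_slope_mul_le (x t d : ℝ) :
    squareBellman x t + squareBellmanSlope x t * d ≤ squareBellman (x + d) (t - d ^ 2) := by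
  rcases le_or_gt t (x ^ 2) with h | h
  · refine le_trans ?_ (abs_le_squareBellman _ _)
    simp only [squareBellman, squareBellmanSlope, if_pos h]
    split_ifs with hx
    · rw [abs_of_nonneg hx]; linarith [le_abs_self (x + d)]
    · rw [abs_of_neg (not_le.mp hx)]; linarith [neg_le_abs (x + d)]
  · have hx : |x| < √t := Real.lt_sqrt_of_sq_lt ((sq_abs x).trans_lt h)
    have hr : 0 < √t := (abs_nonneg x).trans_lt hx
    have hs : √t ^ 2 = t := Real.sq_sqrt ((sq_nonneg x).trans h.le)
    have hlhs : squareBellman x t + squareBellmanSlope x t * d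
        = ((x + d) ^ 2 + (t - d ^ 2)) / (2 * √t) := by
      rw [squareBellman_of_sq_lt h, squareBellmanSlope_of_sq_lt h]
      field_simp
      ring
    rw [hlhs]
    rcases le_or_gt |x + d| √t with hxd | hxd
    · exact div_le_squareBellman hr hxd (by rw [hs]; linarith [sq_nonneg d])
    · -- `(|x + d| - √t)² ≤ d²` since `0 < |x + d| - √t < |d|`
      refine le_trans ?_ (abs_le_squareBellman _ _)
      rw [div_le_iff₀ (by positivity), ← sq_abs (x + d), ← sq_abs d]
      nlinarith [abs_add_le x d, abs_nonneg d]

lemma measurable_squareBellman : Measurable (uncurry squareBellman) := by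
  refine Measurable.ite ?_ ?_ ?_
  · exact measurableSet_le measurable_snd (measurable_fst.pow_const 2)
  · exact measurable_fst.abs
  · exact ((measurable_fst.pow_const 2).add measurable_snd).div
      ((Real.continuous_sqrt.measurable.comp measurable_snd).const_mul 2)

lemma measurable_squareBellmanSlope : Measurable (uncurry squareBellmanSlope) := by
  refine Measurable.ite ?_ ?_ ?_
  · exact measurableSet_le measurable_snd (measurable_fst.pow_const 2)
  · exact Measurable.ite (measurableSet_le measurable_const measurable_fst)
      measurable_const measurable_const
  · exact measurable_fst.div (Real.continuous_sqrt.measurable.comp measurable_snd)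

section QuadVariation

variable {Ω : Type*} {m0 : MeasurableSpace Ω} {μ : Measure Ω} {ℱ : Filtration ℕ m0}
  {f : ℕ → Ω → ℝ}

noncomputable def quadVariation (f : ℕ → Ω → ℝ) (n : ℕ) (ω : Ω) : ℝ :=
  ∑ k ∈ range n, (f (k + 1) ω - f k ω) ^ 2

lemma quadVariation_zero : quadVariation f 0 = 0 := by
  ext ω
  simp [quadVariation]

lemma quadVariation_succ (n : ℕ) (ω : Ω) :
    quadVariation f (n + 1) ω = quadVariation f n ω + (f (n + 1) ω - f n ω) ^ 2 :=
  sum_range_succ _ _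

lemma quadVariation_nonneg (n : ℕ) (ω : Ω) : 0 ≤ quadVariation f n ω :=
  sum_nonneg fun _ _ => sq_nonneg _

lemma monotone_quadVariation (ω : Ω) : Monotone fun n => quadVariation f n ω :=
  monotone_nat_of_le_succ fun n => by
    rw [quadVariation_succ]
    exact le_add_of_nonneg_right (sq_nonneg _)

lemma quadVariation_const_smul (c : ℝ) (n : ℕ) (ω : Ω) :
    quadVariation (c • f) n ω = c ^ 2 * quadVariation f n ω := by
  simp only [quadVariation, Pi.smul_apply, smul_eq_mul, mul_sum, ← mul_sub, mul_pow]

lemma MeasureTheory.StronglyAdapted.measurable_quadVariation (hf : StronglyAdapted ℱ f) (n : ℕ) :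
    Measurable[ℱ n] (quadVariation f n) := by
  refine Finset.measurable_sum _ fun k hk => ?_
  have hk : k + 1 ≤ n := mem_range.mp hk
  exact (((hf (k + 1)).mono (ℱ.mono hk)).measurable.sub
    ((hf k).mono (ℱ.mono (k.le_succ.trans hk))).measurable).pow_const 2

lemma exists_sq_le_quadVariation {l : ℝ} {ω : Ω} (hl : 0 ≤ l)
    (h : l < √(∑' n, (f (n + 1) ω - f n ω) ^ 2)) : ∃ N, l ^ 2 ≤ quadVariation f N ω := by
  rw [Real.lt_sqrt hl] at h
  have hsum : Summable fun n => (f (n + 1) ω - f n ω) ^ 2 := by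
    by_contra hns
    rw [tsum_eq_zero_of_not_summable hns] at h
    exact (sq_nonneg l).not_gt h
  obtain ⟨N, hN⟩ := (hsum.hasSum.tendsto_sum_nat.eventually (lt_mem_nhds h)).exists
  exact ⟨N, hN.le⟩

end QuadVariation

lemma measureReal_iUnion_le_of_monotone {α : Type*} {m : MeasurableSpace α} {μ : Measure α}
    [IsFiniteMeasure μ] {s : ℕ → Set α} (hs : Monotone s) {c : ℝ} (h : ∀ n, μ.real (s n) ≤ c) :
    μ.real (⋃ n, s n) ≤ c :=
  le_of_tendsto' ((ENNReal.tendsto_toReal (measure_ne_top μ _)).comp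
    (tendsto_measure_iUnion_atTop hs)) h

namespace MeasureTheory.Martingale

variable {Ω : Type*} {m0 : MeasurableSpace Ω} {μ : Measure Ω} {ℱ : Filtration ℕ m0}
  {f : ℕ → Ω → ℝ}

lemma integral_mul_sub_eq_zero [IsFiniteMeasure μ] (hf : Martingale f ℱ μ) {n : ℕ}
    {v : Ω → ℝ} (hv : StronglyMeasurable[ℱ n] v) {C : ℝ} (hC : ∀ᵐ ω ∂μ, ‖v ω‖ ≤ C) :
    ∫ ω, v ω * (f (n + 1) ω - f n ω) ∂μ = 0 := by
  have hint : Integrable (f (n + 1) - f n) μ := (hf.integrable _).sub (hf.integrable _)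
  have hcond : μ[f (n + 1) - f n | ℱ n] =ᵐ[μ] 0 := by
    filter_upwards [condExp_sub (hf.integrable (n + 1)) (hf.integrable n) (ℱ n),
      hf.condExp_ae_eq n.le_succ, hf.condExp_ae_eq (le_refl n)] with ω h h₁ h₀
    simp [h, h₁, h₀]
  calc ∫ ω, v ω * (f (n + 1) ω - f n ω) ∂μ = ∫ ω, (μ[v * (f (n + 1) - f n) | ℱ n]) ω ∂μ :=
        (integral_condExp (ℱ.le n)).symm
    _ = 0 := by
        rw [integral_eq_zero_of_ae]
        filter_upwards [condExp_stronglyMeasurable_mul_of_bound (ℱ.le n) hv hint C hC, hcond]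
          with ω h h'
        simp [h, h']

lemma monotone_integral_comp_quadVariation [IsFiniteMeasure μ] (hf : Martingale f ℱ μ)
    {Φ s : ℝ → ℝ → ℝ} (hs : Measurable (uncurry s)) {C : ℝ} (hsC : ∀ x y, |s x y| ≤ C)
    (hΦ : ∀ x y d, Φ x y + s x y * d ≤ Φ (x + d) (y + d ^ 2))
    (hint : ∀ n, Integrable (fun ω => Φ (f n ω) (quadVariation f n ω)) μ) :
    Monotone fun n => ∫ ω, Φ (f n ω) (quadVariation f n ω) ∂μ := by
  refine monotone_nat_of_le_succ fun n => ?_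
  set v : Ω → ℝ := fun ω => s (f n ω) (quadVariation f n ω)
  have hv : StronglyMeasurable[ℱ n] v :=
    (hs.comp ((hf.stronglyAdapted n).measurable.prodMk
      (StronglyAdapted.measurable_quadVariation hf.stronglyAdapted n))).stronglyMeasurable
  have hvC : ∀ᵐ ω ∂μ, ‖v ω‖ ≤ C := ae_of_all _ fun ω => hsC _ _
  have hvD : Integrable (fun ω => v ω * (f (n + 1) ω - f n ω)) μ :=
    ((hf.integrable _).sub (hf.integrable _)).bdd_mul
      (hv.mono (ℱ.le n)).aestronglyMeasurable hvC
  calc ∫ ω, Φ (f n ω) (quadVariation f n ω) ∂μ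
      = ∫ ω, Φ (f n ω) (quadVariation f n ω) + v ω * (f (n + 1) ω - f n ω) ∂μ := by
        rw [integral_add (hint n) hvD, hf.integral_mul_sub_eq_zero hv hvC, add_zero]
    _ ≤ ∫ ω, Φ (f (n + 1) ω) (quadVariation f (n + 1) ω) ∂μ := by
        refine integral_mono ((hint n).add hvD) (hint (n + 1)) fun ω => ?_
        simpa [quadVariation_succ] using hΦ (f n ω) (quadVariation f n ω) (f (n + 1) ω - f n ω)

lemma measurable_quadVariation (hf : Martingale f ℱ μ) (n : ℕ) :
    Measurable (quadVariation f n) :=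
  (StronglyAdapted.measurable_quadVariation hf.stronglyAdapted n).mono (ℱ.le n) le_rfl

lemma integrable_squareBellman_one_sub_quadVariation [IsFiniteMeasure μ]
    (hf : Martingale f ℱ μ) (n : ℕ) :
    Integrable (fun ω => squareBellman (f n ω) (1 - quadVariation f n ω)) μ := by
  refine ((hf.integrable n).abs.add (integrable_const (1 / 2 : ℝ))).mono' ?_
    (ae_of_all _ fun ω => ?_)
  · exact (measurable_squareBellman.comp (((hf.stronglyAdapted n).mono (ℱ.le n)).measurable.prodMk
      ((hf.measurable_quadVariation n).const_sub 1))).aestronglyMeasurable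
  · rw [Real.norm_of_nonneg ((abs_nonneg _).trans (abs_le_squareBellman _ _))]
    exact squareBellman_le_abs_add_half (by linarith [quadVariation_nonneg (f := f) n ω])

lemma measureReal_one_le_quadVariation_le [IsProbabilityMeasure μ] (hf : Martingale f ℱ μ)
    (h0 : f 0 = 0) (N : ℕ) :
    μ.real {ω | 1 ≤ quadVariation f N ω} ≤ 2 * ∫ ω, |f N ω| ∂μ := by
  set A := {ω | 1 ≤ quadVariation f N ω}
  have hA : MeasurableSet A := measurableSet_le measurable_const (hf.measurable_quadVariation N)
  have hmono := hf.monotone_integral_comp_quadVariation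
    (Φ := fun x y => squareBellman x (1 - y)) (s := fun x y => squareBellmanSlope x (1 - y))
    (measurable_squareBellmanSlope.comp (measurable_fst.prodMk (measurable_snd.const_sub 1)))
    (fun x y => abs_squareBellmanSlope_le x (1 - y))
    (fun x y d => by simpa [sub_add_eq_sub_sub] using squareBellman_add_slope_mul_le x (1 - y) d)
    hf.integrable_squareBellman_one_sub_quadVariation
  have hstart : ∫ ω, squareBellman (f 0 ω) (1 - quadVariation f 0 ω) ∂μ = 1 / 2 := by
    simp [h0, quadVariation_zero, squareBellman_zero_one]
  have hend : ∀ ω, squareBellman (f N ω) (1 - quadVariation f N ω)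
      ≤ |f N ω| + 1 / 2 - A.indicator (fun _ => 1 / 2) ω := by
    intro ω
    by_cases hω : ω ∈ A
    · rw [Set.indicator_of_mem hω, squareBellman_one_sub_of_one_le _ hω]
      linarith
    · rw [Set.indicator_of_notMem hω, sub_zero]
      exact squareBellman_le_abs_add_half (by linarith [quadVariation_nonneg (f := f) N ω])
  have hfN : Integrable (fun ω => |f N ω| + 1 / 2) μ :=
    (hf.integrable N).abs.add (integrable_const _)
  have hind : Integrable (A.indicator fun _ => (1 / 2 : ℝ)) μ := (integrable_const _).indicator hA
  have key : (1 / 2 : ℝ) ≤ ∫ ω, |f N ω| ∂μ + 1 / 2 - μ.real A / 2 := calc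
    (1 / 2 : ℝ) = ∫ ω, squareBellman (f 0 ω) (1 - quadVariation f 0 ω) ∂μ := hstart.symm
    _ ≤ ∫ ω, squareBellman (f N ω) (1 - quadVariation f N ω) ∂μ := hmono (Nat.zero_le N)
    _ ≤ ∫ ω, |f N ω| + 1 / 2 - A.indicator (fun _ => (1 / 2 : ℝ)) ω ∂μ :=
        integral_mono (hf.integrable_squareBellman_one_sub_quadVariation N) (hfN.sub hind) hend
    _ = ∫ ω, |f N ω| ∂μ + 1 / 2 - μ.real A / 2 := by
        rw [integral_sub hfN hind, integral_add (hf.integrable N).abs (integrable_const _),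
          integral_indicator_const _ hA]
        simp [div_eq_mul_inv]
  linarith

lemma mul_measureReal_sq_le_quadVariation_le [IsProbabilityMeasure μ] (hf : Martingale f ℱ μ)
    (h0 : f 0 = 0) {l : ℝ} (hl : 0 < l) (N : ℕ) :
    l * μ.real {ω | l ^ 2 ≤ quadVariation f N ω} ≤ 2 * ∫ ω, |f N ω| ∂μ := by
  have h := (hf.smul l⁻¹).measureReal_one_le_quadVariation_le (by simp [h0]) N
  have hset : {ω | 1 ≤ quadVariation (l⁻¹ • f) N ω} = {ω | l ^ 2 ≤ quadVariation f N ω} := by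
    ext ω
    simp only [Set.mem_ofPred_eq, quadVariation_const_smul, inv_pow]
    rw [← div_eq_inv_mul, one_le_div (by positivity)]
  have hintegral : ∫ ω, |(l⁻¹ • f) N ω| ∂μ = l⁻¹ * ∫ ω, |f N ω| ∂μ := by
    simp only [Pi.smul_apply, smul_eq_mul, abs_mul, abs_inv, abs_of_pos hl, integral_const_mul]
  rw [hset, hintegral, ← mul_assoc, mul_comm 2, mul_assoc, ← div_eq_inv_mul, le_div_iff₀' hl] at h
  exact h

end MeasureTheory.Martingale

/-- Burkholder's weak-type (1,1) inequality for the martingale square function: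
there is an absolute constant `M > 0` such that for every martingale `f` (with
`f 0 = 0`) on a probability space which is bounded in `L¹`, and every `λ > 0`,
`λ · P(S(f) > λ) ≤ M · sup_n E|f_n|`, where
`S(f) = (Σ_n |f_{n+1} - f_n|²)^{1/2}`. -/
theorem stmt_4 :
    ∃ M : ℝ, 0 < M ∧
      ∀ (Ω : Type) (m0 : MeasurableSpace Ω) (μ : Measure Ω), IsProbabilityMeasure μ →
        ∀ (ℱ : Filtration ℕ m0) (f : ℕ → Ω → ℝ), Martingale f ℱ μ →
          f 0 = 0 →
          BddAbove (Set.range fun n => ∫ ω, |f n ω| ∂μ) →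
          ∀ l : ℝ, 0 < l →
            l * (μ {ω | l < Real.sqrt (∑' n : ℕ, (f (n + 1) ω - f n ω) ^ 2)}).toReal ≤
              M * ⨆ n : ℕ, ∫ ω, |f n ω| ∂μ := by
  refine ⟨2, two_pos, fun Ω m0 μ _ ℱ f hf h0 hbdd l hl => ?_⟩
  have hsub : {ω | l < √(∑' n, (f (n + 1) ω - f n ω) ^ 2)}
      ⊆ ⋃ N, {ω | l ^ 2 ≤ quadVariation f N ω} := fun ω hω =>
    Set.mem_iUnion.mpr (exists_sq_le_quadVariation hl.le hω)
  have hmono : Monotone fun N => {ω | l ^ 2 ≤ quadVariation f N ω} :=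
    fun _ _ hNM _ hω => le_trans hω (monotone_quadVariation _ hNM)
  calc l * μ.real {ω | l < √(∑' n, (f (n + 1) ω - f n ω) ^ 2)}
      ≤ l * μ.real (⋃ N, {ω | l ^ 2 ≤ quadVariation f N ω}) := by gcongr; finiteness
    _ ≤ 2 * ⨆ n, ∫ ω, |f n ω| ∂μ := by
        rw [← le_div_iff₀' hl]
        refine measureReal_iUnion_le_of_monotone hmono fun N => ?_
        rw [le_div_iff₀' hl]
        exact (hf.mul_measureReal_sq_le_quadVariation_le h0 hl N).trans
          (by gcongr; exact le_ciSup hbdd N)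
end

section
/- Let A be an n×n complex matrix with positive semidefinite real part Re A = (A + A*)/2 ≥ 0, and let λ > 0. Then Re(A(λ·1 + A)⁻¹) ≥ (1/2)·(λ·1 + A*)⁻¹(|A|² + 2λ·Re A)(λ·1 + A)⁻¹, where |A|² = A*A. -/
open Matrix
open scoped ComplexOrder

/-!
Write `C = (λ·1 + A)⁻¹` and `X = A C = 1 - λ C`. Since
`|A|² + 2λ·Re A = (λ·1 + A)*(λ·1 + A) - λ²`, the right-hand side is `(1 - λ² C*C)/2`, and
`Re X - (1 - λ² C*C)/2 = (1 - λ C)*(1 - λ C)/2 = X*X/2 ≥ 0`.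
Invertibility of `λ·1 + A` comes from its real part `λ + Re A` being positive definite.
-/

namespace Matrix

variable {n : Type*} [Fintype n] [DecidableEq n]

theorem isUnit_of_posDef_add_conjTranspose {B : Matrix n n ℂ} (hB : (B + Bᴴ).PosDef) :
    IsUnit B := by
  by_contra h
  obtain ⟨v, hv, hBv⟩ : ∃ v ≠ 0, B *ᵥ v = 0 := by
    obtain ⟨a, b, hab⟩ := Function.not_injective_iff.mp <| mulVec_injective_iff_isUnit.not.mpr h
    exact ⟨a - b, sub_ne_zero.mpr hab.2, by rw [mulVec_sub, hab.1, sub_self]⟩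
  have hzero : star v ⬝ᵥ ((B + Bᴴ) *ᵥ v) = 0 := by
    rw [add_mulVec, dotProduct_add, hBv, dotProduct_zero, zero_add, dotProduct_mulVec,
      ← star_mulVec, hBv, star_zero, zero_dotProduct]
  exact (hB.dotProduct_mulVec_pos hv).ne' hzero

theorem isUnit_smul_one_add_of_posSemidef {A : Matrix n n ℂ}
    (hA : ((1 / 2 : ℂ) • (A + Aᴴ)).PosSemidef) {l : ℝ} (hl : 0 < l) :
    IsUnit ((l : ℂ) • 1 + A) := by
  refine isUnit_of_posDef_add_conjTranspose ?_
  have hsum : (l : ℂ) • 1 + A + ((l : ℂ) • 1 + A)ᴴ =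
      (2 : ℂ) • ((l : ℂ) • 1 + (1 / 2 : ℂ) • (A + Aᴴ)) := by
    simp only [conjTranspose_add, conjTranspose_smul, conjTranspose_one, Complex.star_def,
      Complex.conj_ofReal]
    module
  rw [hsum]
  exact ((PosDef.one.smul (Complex.zero_lt_real.mpr hl)).add_posSemidef hA).smul two_pos

theorem mul_nonsing_inv_smul_one_add {R : Type*} [CommRing R] {A : Matrix n n R} {c : R}
    (h : IsUnit (c • 1 + A)) : A * (c • 1 + A)⁻¹ = 1 - c • (c • 1 + A)⁻¹ := by
  have hBC := mul_nonsing_inv _ ((isUnit_iff_isUnit_det _).mp h)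
  rw [Matrix.add_mul, Matrix.smul_mul, Matrix.one_mul] at hBC
  rw [eq_sub_iff_add_eq, add_comm, hBC]

variable {𝕜 : Type*} [Field 𝕜] [StarRing 𝕜] [CharZero 𝕜]

theorem conjTranspose_mul_self_add_smul_re_eq (A : Matrix n n 𝕜) {c : 𝕜} (hc : star c = c) :
    Aᴴ * A + (2 * c) • ((1 / 2 : 𝕜) • (A + Aᴴ)) = (c • 1 + A)ᴴ * (c • 1 + A) - (c * c) • 1 := by
  simp only [conjTranspose_add, conjTranspose_smul, conjTranspose_one, hc, Matrix.add_mul,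
    Matrix.mul_add, Matrix.smul_mul, Matrix.mul_smul, Matrix.one_mul, Matrix.mul_one, smul_add,
    smul_smul]
  field_simp
  module

theorem half_smul_mul_inv_add_conjTranspose_sub_eq {A : Matrix n n 𝕜} {c : 𝕜}
    (hc : star c = c) (h : IsUnit (c • 1 + A)) :
    (1 / 2 : 𝕜) • (A * (c • 1 + A)⁻¹ + (A * (c • 1 + A)⁻¹)ᴴ) -
      (1 / 2 : 𝕜) • ((c • 1 + Aᴴ)⁻¹ * (Aᴴ * A + (2 * c) • ((1 / 2 : 𝕜) • (A + Aᴴ))) *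
        (c • 1 + A)⁻¹) =
      (1 / 2 : 𝕜) • ((A * (c • 1 + A)⁻¹)ᴴ * (A * (c • 1 + A)⁻¹)) := by
  set B := c • 1 + A
  have hBC : B * B⁻¹ = 1 := mul_nonsing_inv _ ((isUnit_iff_isUnit_det _).mp h)
  have hBCH : (B⁻¹)ᴴ * Bᴴ = 1 := by rw [← conjTranspose_mul, hBC, conjTranspose_one]
  have hBH : c • 1 + Aᴴ = Bᴴ := by
    rw [conjTranspose_add, conjTranspose_smul, conjTranspose_one, hc]
  have hmid : (B⁻¹)ᴴ * (Bᴴ * B - (c * c) • 1) * B⁻¹ = 1 - (c * c) • ((B⁻¹)ᴴ * B⁻¹) := by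
    rw [Matrix.mul_sub, Matrix.sub_mul, Matrix.mul_smul, Matrix.mul_one, Matrix.smul_mul,
      Matrix.mul_assoc, Matrix.mul_assoc, hBC, Matrix.mul_one, hBCH]
  rw [hBH, ← conjTranspose_nonsing_inv, conjTranspose_mul_self_add_smul_re_eq A hc, hmid,
    mul_nonsing_inv_smul_one_add h, conjTranspose_sub, conjTranspose_one, conjTranspose_smul, hc]
  simp only [Matrix.sub_mul, Matrix.mul_sub, Matrix.one_mul, Matrix.mul_one, Matrix.smul_mul,
    Matrix.mul_smul]
  module

end Matrix

/-- If `Re A = (A + A*)/2 ≥ 0` and `λ > 0`, then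
`Re(A(λ·1 + A)⁻¹) ≥ (1/2)·(λ·1 + A*)⁻¹ (|A|² + 2λ·Re A) (λ·1 + A)⁻¹`. -/
theorem stmt_14 {d : ℕ} (A : Matrix (Fin d) (Fin d) ℂ)
    (hA : ((1 / 2 : ℂ) • (A + Aᴴ)).PosSemidef) (l : ℝ) (hl : 0 < l) :
    ((1 / 2 : ℂ) • (A * ((l : ℂ) • 1 + A)⁻¹ + (A * ((l : ℂ) • 1 + A)⁻¹)ᴴ) -
      (1 / 2 : ℂ) • (((l : ℂ) • 1 + Aᴴ)⁻¹ *
        (Aᴴ * A + (2 * (l : ℂ)) • ((1 / 2 : ℂ) • (A + Aᴴ))) *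
        ((l : ℂ) • 1 + A)⁻¹)).PosSemidef := by
  rw [half_smul_mul_inv_add_conjTranspose_sub_eq (Complex.conj_ofReal l)
    (isUnit_smul_one_add_of_posSemidef hA hl)]
  exact (posSemidef_conjTranspose_mul_self _).smul (by positivity)
end

section
/- Let (x_n)_{n=1}^N be a finite martingale of positive semidefinite matrices in (M_d(ℂ), τ) with conditional expectations E_n onto subalgebras M_n, and let (q_n) be projections with q_n ∈ M_n, q_n ≤ q_{n-1}, q_n commuting with q_{n-1} x_n q_{n-1}, and q_{n-1} x_{n-1} q_{n-1} ≤ λ q_{n-1}. Then Σ_{n=2}^N τ((q_{n-1} - q_n)(x_n - x_{n-1})(q_{n-1} - q_n)) ≤ τ(q_1 x_1 q_1 - q_N x_N q_N) ≤ τ((q_1 - q_N) x_N). -/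
open Matrix
open scoped ComplexOrder

/-!
Write `g n = τ(q_n x_n q_n)`. For projections `b ≤ a` one has
`τ((a - b) y (a - b)) = τ(a y a) - τ(b y b)`, and the martingale property gives
`τ(q_{n-1} x_n q_{n-1}) = τ(q_{n-1} E_{n-1}(x_n) q_{n-1}) = g (n - 1)`. Hence the `n`-th summand
equals `g (n - 1) - g n - τ((q_{n-1} - q_n) x_{n-1} (q_{n-1} - q_n))`, which is at most
`g (n - 1) - g n` by positivity of `x_{n-1}`; the sum telescopes to `g 1 - g N`.
For the second inequality, `τ(q_1 x_n)` is constant in `n` because `q_1 ∈ M_n` for `n ≥ 1`,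
so `g 1 - g N = τ(q_1 x_N) - τ(q_N x_N)`.
-/

theorem Finset.sum_Icc_pred_sub {M : Type*} [AddCommGroup M] (g : ℕ → M) {N : ℕ} (hN : 1 ≤ N) :
    ∑ n ∈ Finset.Icc 2 N, (g (n - 1) - g n) = g 1 - g N := by
  induction N, hN using Nat.le_induction with
  | base => simp
  | succ N hN ih =>
    rw [Finset.sum_Icc_succ_top (by omega), ih, Nat.add_sub_cancel]
    abel

namespace Matrix

section CommRing

variable {ι R : Type*} [Fintype ι] [CommRing R]

theorem trace_mul_mul_self_of_isIdempotentElem {p : Matrix ι ι R} (hp : IsIdempotentElem p)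
    (y : Matrix ι ι R) : trace (p * y * p) = trace (p * y) := by
  rw [trace_mul_cycle, hp.eq]

theorem trace_sub_mul_mul_sub_of_mul_eq {a b : Matrix ι ι R} (hb : IsIdempotentElem b)
    (hab : a * b = b) (hba : b * a = b) (y : Matrix ι ι R) :
    trace ((a - b) * y * (a - b)) = trace (a * y * a) - trace (b * y * b) := by
  have hayb : trace (a * y * b) = trace (b * y) := by rw [trace_mul_cycle, hba]
  have hbya : trace (b * y * a) = trace (b * y) := by rw [trace_mul_cycle, hab]
  simp only [sub_mul, mul_sub, trace_sub, hayb, hbya, trace_mul_mul_self_of_isIdempotentElem hb]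
  ring

variable [DecidableEq ι]

theorem trace_mul_condExp {S : Subalgebra R (Matrix ι ι R)} {E : Matrix ι ι R → Matrix ι ι R}
    (htr : ∀ a, trace (E a) = trace a)
    (hmod : ∀ a b c, a ∈ S → b ∈ S → E (a * c * b) = a * E c * b)
    {a : Matrix ι ι R} (ha : a ∈ S) (c : Matrix ι ι R) :
    trace (a * E c) = trace (a * c) := by
  have h := htr (a * c * 1)
  rwa [hmod a 1 c ha S.one_mem, mul_one, mul_one] at h

theorem trace_mul_eq_of_martingale {S : ℕ → Subalgebra R (Matrix ι ι R)} (hS : Monotone S)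
    {x : ℕ → Matrix ι ι R} {N : ℕ}
    (hx : ∀ n ∈ Finset.Icc 2 N, ∀ a ∈ S (n - 1), trace (a * x n) = trace (a * x (n - 1)))
    {k : ℕ} (hk : 1 ≤ k) {a : Matrix ι ι R} (ha : a ∈ S k) {m : ℕ} (hkm : k ≤ m) (hmN : m ≤ N) :
    trace (a * x m) = trace (a * x k) := by
  induction m, hkm using Nat.le_induction with
  | base => rfl
  | succ m hkm ih =>
    rw [hx (m + 1) (Finset.mem_Icc.mpr ⟨by omega, hmN⟩) a (hS (by omega) ha), Nat.add_sub_cancel,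
      ih (by omega)]

end CommRing

theorem re_trace_sub_mul_mul_sub_le {ι : Type*} [Fintype ι] {a b y z : Matrix ι ι ℂ}
    (ha : IsStarProjection a) (hb : IsStarProjection b) (hba : b * a = b) (hy : y.PosSemidef)
    (hz : trace (a * z) = trace (a * y)) :
    (trace ((a - b) * (z - y) * (a - b))).re ≤ (trace (a * y * a)).re - (trace (b * z * b)).re := by
  have hab : a * b = b := by
    simpa [ha.isSelfAdjoint.star_eq, hb.isSelfAdjoint.star_eq] using congr(star $(hba))
  have hconj (w : Matrix ι ι ℂ) :=
    trace_sub_mul_mul_sub_of_mul_eq hb.isIdempotentElem hab hba w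
  have hsplit : trace ((a - b) * (z - y) * (a - b)) =
      trace (a * y * a) - trace (b * z * b) - trace ((a - b) * y * (a - b)) := by
    rw [mul_sub (a - b) z y, sub_mul _ _ (a - b), trace_sub, hconj, hconj,
      trace_mul_mul_self_of_isIdempotentElem ha.isIdempotentElem z, hz,
      ← trace_mul_mul_self_of_isIdempotentElem ha.isIdempotentElem y]
  have hpos : 0 ≤ (trace ((a - b) * y * (a - b))).re := by
    have hsa : (a - b)ᴴ = a - b := (ha.isSelfAdjoint.sub hb.isSelfAdjoint).star_eq
    have := (hy.mul_mul_conjTranspose_same (a - b)).trace_nonneg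
    rw [hsa] at this
    exact (Complex.nonneg_iff.mp this).1
  rw [hsplit, Complex.sub_re, Complex.sub_re]
  linarith

end Matrix

theorem stmt_18_general {d : ℕ} (N : ℕ) (hN : 2 ≤ N)
    (S : ℕ → Subalgebra ℂ (Matrix (Fin d) (Fin d) ℂ))
    (E : ℕ → Matrix (Fin d) (Fin d) ℂ →ₗ[ℂ] Matrix (Fin d) (Fin d) ℂ)
    (x q : ℕ → Matrix (Fin d) (Fin d) ℂ)
    (hmono : ∀ n, S n ≤ S (n + 1))
    (hEtr : ∀ n a, Matrix.trace (E n a) = Matrix.trace a)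
    (hEmod : ∀ n a b c, a ∈ S n → b ∈ S n → E n (a * c * b) = a * E n c * b)
    (hpos : ∀ n, (x n).PosSemidef)
    (hmart : ∀ n ∈ Finset.Icc 2 N, E (n - 1) (x n) = x (n - 1))
    (hqmem : ∀ n, q n ∈ S n)
    (hqherm : ∀ n, (q n)ᴴ = q n) (hqidem : ∀ n, q n * q n = q n)
    (hqdec : ∀ n ∈ Finset.Icc 2 N, q n * q (n - 1) = q n) :
    (∑ n ∈ Finset.Icc 2 N,
        (Matrix.trace ((q (n - 1) - q n) * (x n - x (n - 1)) *
          (q (n - 1) - q n))).re)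
      ≤ (Matrix.trace (q 1 * x 1 * q 1 - q N * x N * q N)).re ∧
    (Matrix.trace (q 1 * x 1 * q 1 - q N * x N * q N)).re ≤
      (Matrix.trace ((q 1 - q N) * x N)).re := by
  have hS : Monotone S := monotone_nat_of_le_succ hmono
  have hproj (n : ℕ) : IsStarProjection (q n) := isStarProjection_iff'.mpr ⟨hqidem n, hqherm n⟩
  have hmartTrace : ∀ n ∈ Finset.Icc 2 N, ∀ a ∈ S (n - 1),
      trace (a * x n) = trace (a * x (n - 1)) := fun n hn a ha => by
    rw [← hmart n hn, trace_mul_condExp (hEtr _) (hEmod _) ha]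
  constructor
  · calc _ ≤ ∑ n ∈ Finset.Icc 2 N,
          ((trace (q (n - 1) * x (n - 1) * q (n - 1))).re - (trace (q n * x n * q n)).re) :=
          Finset.sum_le_sum fun n hn => re_trace_sub_mul_mul_sub_le (hproj _) (hproj _)
            (hqdec n hn) (hpos _) (hmartTrace n hn _ (hqmem _))
      _ = _ := by
          rw [Finset.sum_Icc_pred_sub (fun n => (trace (q n * x n * q n)).re) (by omega), trace_sub,
            Complex.sub_re]
  · rw [trace_sub, sub_mul, trace_sub,
      trace_mul_mul_self_of_isIdempotentElem (hproj 1).isIdempotentElem,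
      trace_mul_mul_self_of_isIdempotentElem (hproj N).isIdempotentElem,
      trace_mul_eq_of_martingale hS hmartTrace le_rfl (hqmem 1) (by omega : 1 ≤ N) le_rfl]

/-- Trace estimate of Lemma 3.7: for a finite positive martingale `(x_n)` with
Cuculescu projections `(q_n)` at level `λ`,
`Σ_{n=2}^N τ((q_{n-1}-q_n)(x_n-x_{n-1})(q_{n-1}-q_n))
  ≤ τ(q_1 x_1 q_1 - q_N x_N q_N) ≤ τ((q_1 - q_N) x_N)`. -/
theorem stmt_18 {d : ℕ} (N : ℕ) (hN : 2 ≤ N)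
    (S : ℕ → Subalgebra ℂ (Matrix (Fin d) (Fin d) ℂ))
    (E : ℕ → Matrix (Fin d) (Fin d) ℂ →ₗ[ℂ] Matrix (Fin d) (Fin d) ℂ)
    (x q : ℕ → Matrix (Fin d) (Fin d) ℂ) (l : ℝ) (hl : 0 < l)
    (hmono : ∀ n, S n ≤ S (n + 1))
    (hEmem : ∀ n a, E n a ∈ S n)
    (hEfix : ∀ n a, a ∈ S n → E n a = a)
    (hEtr : ∀ n a, Matrix.trace (E n a) = Matrix.trace a)
    (hEmod : ∀ n a b c, a ∈ S n → b ∈ S n → E n (a * c * b) = a * E n c * b)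
    (hpos : ∀ n, (x n).PosSemidef)
    (hmart : ∀ n ∈ Finset.Icc 2 N, E (n - 1) (x n) = x (n - 1))
    (hqmem : ∀ n, q n ∈ S n)
    (hqherm : ∀ n, (q n)ᴴ = q n) (hqidem : ∀ n, q n * q n = q n)
    (hqdec : ∀ n ∈ Finset.Icc 2 N, q n * q (n - 1) = q n)
    (hqcomm : ∀ n ∈ Finset.Icc 2 N, Commute (q n) (q (n - 1) * x n * q (n - 1)))
    (hqbdd : ∀ n ∈ Finset.Icc 2 N,
      ((l : ℂ) • q (n - 1) - q (n - 1) * x (n - 1) * q (n - 1)).PosSemidef) :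
    (∑ n ∈ Finset.Icc 2 N,
        (Matrix.trace ((q (n - 1) - q n) * (x n - x (n - 1)) *
          (q (n - 1) - q n))).re)
      ≤ (Matrix.trace (q 1 * x 1 * q 1 - q N * x N * q N)).re ∧
    (Matrix.trace (q 1 * x 1 * q 1 - q N * x N * q N)).re ≤
      (Matrix.trace ((q 1 - q N) * x N)).re :=
  stmt_18_general N hN S E x q hmono hEtr hEmod hpos hmart hqmem hqherm hqidem hqdec
end
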